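/- Let β_A, β_H > 0 and α_A, α_H > 0 with (β_A, α_A) ≠ (β_H, α_H) and β_A ≠ β_H (i.e. the parameters lie in P_SP,1 ∪ P_SP,2 ∪ P_SP,3ab ∪ P_SP,3c ∪ P_SP,3d, which together form the set of all strictly positive parameters with β_A ≠ β_H), and let ω₀ ≥ 1. Then the sequences of path laws (P_{A,n})_{n≥1} and (P_{H,n})_{n≥1} are entirely separated: there exist a strictly increasing sequence (n_m)_{m∈ℕ} in ℕ and sets A_m ⊆ ℕ₀^{n_m} such that Σ_{ω∈A_m} p_{A,n_m}(ω) → 1 and Σ_{ω∈A_m} p_{H,n_m}(ω) → 0 as m → ∞. -/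

import Mathlib

open Real Filter

/-- One transition weight of the Poisson Galton–Watson process with immigration:
probability that the next generation size is `y` given the previous size is `x`. -/
noncomputable def gwStep (β α : ℝ) (x y : ℕ) : ℝ :=
  Real.exp (-(β * (x : ℝ) + α)) * (β * (x : ℝ) + α) ^ y / (Nat.factorial y : ℝ)

/-- The `n`-step path law (pmf on `Fin n → ℕ`) with initial generation size `ω₀`. -/
noncomputable def gwPath (β α : ℝ) (ω₀ n : ℕ) (ω : Fin n → ℕ) : ℝ :=
  ∏ k : Fin n,
    gwStep β α
      (if (k : ℕ) = 0 then ω₀ else ω ⟨(k : ℕ) - 1, Nat.lt_of_le_of_lt (Nat.sub_le _ _) k.2⟩)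
      (ω k)

/-- Hellinger integral of order `lam` between the `n`-step path laws. -/
noncomputable def hellinger (βA αA βH αH lam : ℝ) (ω₀ n : ℕ) : ℝ :=
  ∑' ω : Fin n → ℕ, gwPath βA αA ω₀ n ω ^ lam * gwPath βH αH ω₀ n ω ^ (1 - lam)

/-- The recursion `a₀ = 0`, `a_{n+1} = q·e^{a_n} − βl`. -/
noncomputable def aSeq (q βl : ℝ) : ℕ → ℝ
  | 0 => 0
  | n + 1 => q * Real.exp (aSeq q βl n) - βl

/-- The recursion `b₀ = 0`, `b_{n+1} = p·e^{a_n} − αl`. -/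
noncomputable def bSeq (p q βl αl : ℝ) : ℕ → ℝ
  | 0 => 0
  | n + 1 => p * Real.exp (aSeq q βl n) - αl


open scoped ENNReal Nat Topology

/-!
The Hellinger affinity `∑ ω, √(p_{A,n}(ω) p_{H,n}(ω))` (the Hellinger integral of order `1/2`) of
the two path laws tends to zero. This suffices: `P_{A,n}` of the complement of the likelihood-ratio
set `{p_{H,n} ≤ p_{A,n}}` and `P_{H,n}` of the set itself are both bounded by the affinity.

The affinity is a path sum of the sub-stochastic kernel `√(P_A(x, y) P_H(x, y))`, which for Poisson
transitions is `exp (-(√f_A(x) - √f_H(x))² / 2)` times the Poisson law of rate `√(f_A(x) f_H(x))`.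
Since `β_A ≠ β_H` the exponent tends to infinity with `x`, and since `α_A, α_H > 0` each of these
Poisson laws charges every state. So two steps of the kernel have mass `< 1` from every state and
mass tending to `0` as the state grows: they are bounded by some `ρ < 1`, and the affinity after
`n` steps is at most `ρ ^ (n / 2)`. A single step does not suffice, as its mass is `1` at a state
where `f_A = f_H`.
-/

theorem hasSum_toReal_tsum_ofReal {ι : Type*} {f : ι → ℝ} (hf : ∀ i, 0 ≤ f i)
    (h : ∑' i, ENNReal.ofReal (f i) ≠ ∞) : HasSum f (∑' i, ENNReal.ofReal (f i)).toReal := by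
  have hs : Summable f :=
    (ENNReal.summable_toReal h).congr fun i => ENNReal.toReal_ofReal (hf i)
  rw [← ENNReal.ofReal_tsum_of_nonneg hf hs, ENNReal.toReal_ofReal (tsum_nonneg hf)]
  exact hs.hasSum

section PathWeight

variable {α M : Type*}

noncomputable def pathWeight [CommMonoid M] (f : α → α → M) (x : α) {n : ℕ} (ω : Fin n → α) : M :=
  ∏ k, f ((Fin.cons x ω : Fin (n + 1) → α) k.castSucc) (ω k)

theorem pathWeight_cons [CommMonoid M] (f : α → α → M) (x y : α) {n : ℕ} (ω : Fin n → α) :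
    pathWeight f x (Fin.cons y ω : Fin (n + 1) → α) = f x y * pathWeight f y ω := by
  simp [pathWeight, Fin.prod_univ_succ]

theorem tsum_pathWeight_succ (f : α → α → ℝ≥0∞) (x : α) (n : ℕ) :
    ∑' ω : Fin (n + 1) → α, pathWeight f x ω
      = ∑' y, f x y * ∑' ω : Fin n → α, pathWeight f y ω := by
  rw [← (Fin.consEquiv fun _ => α).tsum_eq, ENNReal.tsum_prod']
  refine tsum_congr fun y => ?_
  rw [← ENNReal.tsum_mul_left]
  exact tsum_congr fun ω => pathWeight_cons f x y ω

theorem tsum_pathWeight_eq_one {f : α → α → ℝ≥0∞} (hf : ∀ x, ∑' y, f x y = 1) (x : α) (n : ℕ) :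
    ∑' ω : Fin n → α, pathWeight f x ω = 1 := by
  induction n generalizing x with
  | zero => simp [pathWeight]
  | succ n ih => simp [tsum_pathWeight_succ, ih, hf]

theorem tsum_pathWeight_le_one {f : α → α → ℝ≥0∞} (hf : ∀ x, ∑' y, f x y ≤ 1) (x : α) (n : ℕ) :
    ∑' ω : Fin n → α, pathWeight f x ω ≤ 1 := by
  induction n generalizing x with
  | zero => simp [pathWeight]
  | succ n ih =>
    rw [tsum_pathWeight_succ]
    calc _ ≤ ∑' y, f x y * 1 := by gcongr with y; exact ih y
      _ ≤ 1 := by simpa using hf x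

theorem tsum_pathWeight_le_pow_half {f : α → α → ℝ≥0∞} {ρ : ℝ≥0∞} (hf : ∀ x, ∑' y, f x y ≤ 1)
    (hρ : ∀ x, ∑' y, f x y * ∑' z, f y z ≤ ρ) (x : α) (n : ℕ) :
    ∑' ω : Fin n → α, pathWeight f x ω ≤ ρ ^ (n / 2) := by
  induction n using Nat.strong_induction_on generalizing x with
  | _ n ih =>
    match n with
    | 0 => simp [pathWeight]
    | 1 => simpa using tsum_pathWeight_le_one hf x 1
    | n + 2 =>
      rw [tsum_pathWeight_succ]
      calc ∑' y, f x y * ∑' ω : Fin (n + 1) → α, pathWeight f y ω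
          ≤ ∑' y, f x y * ∑' z, f y z * ρ ^ (n / 2) := by
            gcongr with y
            rw [tsum_pathWeight_succ]
            gcongr with z
            exact ih n (by omega) z
        _ = (∑' y, f x y * ∑' z, f y z) * ρ ^ (n / 2) := by
            simp only [ENNReal.tsum_mul_right, ← mul_assoc]
        _ ≤ ρ * ρ ^ (n / 2) := by gcongr; exact hρ x
        _ = ρ ^ ((n + 2) / 2) := by rw [Nat.add_div_right n two_pos, pow_succ']

theorem ofReal_pathWeight {f : α → α → ℝ} (hf : ∀ x y, 0 ≤ f x y) (x : α) {n : ℕ}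
    (ω : Fin n → α) :
    ENNReal.ofReal (pathWeight f x ω) = pathWeight (fun a b => ENNReal.ofReal (f a b)) x ω :=
  ENNReal.ofReal_prod_of_nonneg fun _ _ => hf _ _

theorem sqrt_pathWeight_mul {f g : α → α → ℝ} (hf : ∀ x y, 0 ≤ f x y) (hg : ∀ x y, 0 ≤ g x y)
    (x : α) {n : ℕ} (ω : Fin n → α) :
    √(pathWeight f x ω * pathWeight g x ω) = pathWeight (fun a b => √(f a b * g a b)) x ω := by
  rw [pathWeight, pathWeight, ← Finset.prod_mul_distrib,
    Real.sqrt_prod _ fun _ _ => mul_nonneg (hf _ _) (hg _ _)]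
  rfl

end PathWeight

section RealKernel

variable {α : Type*} {f : α → α → ℝ}

theorem pathWeight_nonneg (hf : ∀ x y, 0 ≤ f x y) (x : α) {n : ℕ} (ω : Fin n → α) :
    0 ≤ pathWeight f x ω :=
  Finset.prod_nonneg fun _ _ => hf _ _

theorem hasSum_pathWeight (hf : ∀ x y, 0 ≤ f x y) (hf₁ : ∀ x, HasSum (f x) 1) (x : α) (n : ℕ) :
    HasSum (fun ω : Fin n → α => pathWeight f x ω) 1 := by
  have h : ∑' ω : Fin n → α, ENNReal.ofReal (pathWeight f x ω) = 1 := by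
    simp_rw [ofReal_pathWeight hf]
    refine tsum_pathWeight_eq_one (fun a => ?_) x n
    rw [← ENNReal.ofReal_tsum_of_nonneg (hf a) (hf₁ a).summable, (hf₁ a).tsum_eq,
      ENNReal.ofReal_one]
  have hB := hasSum_toReal_tsum_ofReal (pathWeight_nonneg hf x) (h ▸ ENNReal.one_ne_top)
  rwa [h, ENNReal.toReal_one] at hB

theorem tsum_ofReal_pathWeight_le_pow_half (hf : ∀ x y, 0 ≤ f x y) {g : α → ℝ}
    (hfg : ∀ x, HasSum (f x) (g x)) (hg : ∀ x, g x ≤ 1) {ρ : ℝ} (hρ : ∀ x, ∑' y, f x y * g y ≤ ρ)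
    (x : α) (n : ℕ) :
    ∑' ω : Fin n → α, ENNReal.ofReal (pathWeight f x ω) ≤ ENNReal.ofReal ρ ^ (n / 2) := by
  have hsum : ∀ x, ∑' y, ENNReal.ofReal (f x y) = ENNReal.ofReal (g x) := fun x => by
    rw [← ENNReal.ofReal_tsum_of_nonneg (hf x) (hfg x).summable, (hfg x).tsum_eq]
  have hg₀ : ∀ x, 0 ≤ g x := fun x => (hfg x).nonneg (hf x)
  simp_rw [ofReal_pathWeight hf]
  refine tsum_pathWeight_le_pow_half (fun x => ?_) (fun x => ?_) x n
  · rw [hsum]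
    exact ENNReal.ofReal_le_one.2 (hg x)
  · have hle : ∀ y, f x y * g y ≤ f x y := fun y => mul_le_of_le_one_right (hf x y) (hg y)
    simp_rw [hsum, ← ENNReal.ofReal_mul (hf x _)]
    rw [← ENNReal.ofReal_tsum_of_nonneg (fun y => mul_nonneg (hf x y) (hg₀ y))
      (.of_nonneg_of_le (fun y => mul_nonneg (hf x y) (hg₀ y)) hle (hfg x).summable)]
    exact ENNReal.ofReal_le_ofReal (hρ x)

end RealKernel

noncomputable def poissonWeight (t : ℝ) (k : ℕ) : ℝ := exp (-t) * t ^ k / k !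

section Poisson

variable {t p q : ℝ}

theorem hasSum_poissonWeight (t : ℝ) : HasSum (poissonWeight t) 1 := by
  have h := (NormedSpace.expSeries_div_hasSum_exp t).mul_left (exp (-t))
  rw [← Real.exp_eq_exp_ℝ, ← Real.exp_add, neg_add_cancel, Real.exp_zero] at h
  exact h.congr_fun fun k => mul_div_assoc _ _ _

theorem poissonWeight_nonneg (ht : 0 ≤ t) (k : ℕ) : 0 ≤ poissonWeight t k := by
  unfold poissonWeight; positivity

theorem poissonWeight_pos (ht : 0 < t) (k : ℕ) : 0 < poissonWeight t k := by
  unfold poissonWeight; positivity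

theorem sqrt_poissonWeight_mul (hp : 0 ≤ p) (hq : 0 ≤ q) (k : ℕ) :
    √(poissonWeight p k * poissonWeight q k)
      = exp (-(√p - √q) ^ 2 / 2) * poissonWeight (√p * √q) k := by
  have hexp : exp (-p) * exp (-q) = (exp (-(√p - √q) ^ 2 / 2) * exp (-(√p * √q))) ^ 2 := by
    rw [← Real.exp_add, ← Real.exp_add, ← Real.exp_nat_mul]
    congr 1
    nlinarith [Real.sq_sqrt hp, Real.sq_sqrt hq]
  have hpow : p ^ k * q ^ k = ((√p * √q) ^ k) ^ 2 := by
    rw [← pow_mul, mul_pow, mul_comm k 2, pow_mul, pow_mul, Real.sq_sqrt hp, Real.sq_sqrt hq]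
  rw [← Real.sqrt_sq (mul_nonneg (Real.exp_nonneg _) (poissonWeight_nonneg (by positivity) k))]
  congr 1
  simp only [poissonWeight]
  rw [div_mul_div_comm, mul_mul_mul_comm, hexp, hpow]
  ring

theorem hasSum_sqrt_poissonWeight_mul (hp : 0 ≤ p) (hq : 0 ≤ q) :
    HasSum (fun k => √(poissonWeight p k * poissonWeight q k)) (exp (-(√p - √q) ^ 2 / 2)) := by
  simpa [sqrt_poissonWeight_mul hp hq] using
    (hasSum_poissonWeight (√p * √q)).mul_left (exp (-(√p - √q) ^ 2 / 2))

theorem tsum_poissonWeight_mul_lt_one (ht : 0 < t) {e : ℕ → ℝ} (he₀ : ∀ k, 0 ≤ e k)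
    (he₁ : ∀ k, e k ≤ 1) {j : ℕ} (hj : e j < 1) : ∑' k, poissonWeight t k * e k < 1 := by
  have hle : ∀ k, poissonWeight t k * e k ≤ poissonWeight t k := fun k =>
    mul_le_of_le_one_right (poissonWeight_nonneg ht.le k) (he₁ k)
  refine hasSum_lt (i := j) hle ?_ (Summable.of_nonneg_of_le (fun k => ?_) hle
    (hasSum_poissonWeight t).summable).hasSum (hasSum_poissonWeight t)
  · exact mul_lt_of_lt_one_right (poissonWeight_pos ht j) hj
  · exact mul_nonneg (poissonWeight_nonneg ht.le k) (he₀ k)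

end Poisson

theorem tendsto_sq_sqrt_sub_sqrt_atTop {β₁ β₂ : ℝ} (α₁ α₂ : ℝ) (hβ₁ : 0 ≤ β₁) (hβ₂ : 0 ≤ β₂)
    (hβ : β₁ ≠ β₂) :
    Tendsto (fun x : ℝ => (√(β₁ * x + α₁) - √(β₂ * x + α₂)) ^ 2) atTop atTop := by
  have hlim : Tendsto (fun x : ℝ => (√(β₁ + α₁ * x⁻¹) - √(β₂ + α₂ * x⁻¹)) ^ 2) atTop
      (𝓝 ((√β₁ - √β₂) ^ 2)) := by
    have h₀ := tendsto_inv_atTop_zero (𝕜 := ℝ)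
    simpa using ((((h₀.const_mul α₁).const_add β₁).sqrt).sub
      (((h₀.const_mul α₂).const_add β₂).sqrt)).pow 2
  have hpos : 0 < (√β₁ - √β₂) ^ 2 := by
    have : √β₁ - √β₂ ≠ 0 := sub_ne_zero.2 fun h => hβ ((Real.sqrt_inj hβ₁ hβ₂).1 h)
    positivity
  refine (tendsto_id.atTop_mul_pos hpos hlim).congr' ?_
  filter_upwards [eventually_gt_atTop 0] with x hx
  have hsqrt : ∀ β α : ℝ, √(β * x + α) = √x * √(β + α * x⁻¹) := fun β α => by
    rw [← Real.sqrt_mul hx.le]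
    congr 1
    field_simp
  rw [hsqrt, hsqrt, ← mul_sub, mul_pow, Real.sq_sqrt hx.le, id]

theorem exists_lt_forall_le_of_tendsto {s : ℕ → ℝ} {l c : ℝ} (hs : ∀ n, s n < c)
    (hlim : Tendsto s atTop (𝓝 l)) (hl : l < c) : ∃ ρ < c, ∀ n, s n ≤ ρ := by
  obtain ⟨b, hlb, hbc⟩ := exists_between hl
  obtain ⟨N, hN⟩ := eventually_atTop.1 (hlim.eventually (ge_mem_nhds hlb))
  obtain ⟨m, -, hm⟩ := (Finset.range (N + 1)).exists_max_image s ⟨0, by simp⟩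
  refine ⟨max b (s m), max_lt hbc (hs m), fun n => ?_⟩
  rcases lt_or_ge n N with hn | hn
  · exact le_max_of_le_right (hm n (Finset.mem_range.2 (by omega)))
  · exact le_max_of_le_left (hN n hn)

theorem summable_sqrt_mul {ι : Type*} {p q : ι → ℝ} (hp : ∀ i, 0 ≤ p i) (hq : ∀ i, 0 ≤ q i)
    (hps : Summable p) (hqs : Summable q) : Summable fun i => √(p i * q i) := by
  refine .of_nonneg_of_le (fun i => Real.sqrt_nonneg _) (fun i => ?_) (hps.add hqs)
  calc √(p i * q i) ≤ √((p i + q i) * (p i + q i)) := by gcongr <;> linarith [hp i, hq i]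
    _ = p i + q i := Real.sqrt_mul_self (add_nonneg (hp i) (hq i))

theorem tsum_subtype_le_tsum_sqrt_mul {ι : Type*} {p q : ι → ℝ} (hq : ∀ i, 0 ≤ q i)
    (hpq : Summable fun i => √(p i * q i)) {s : Set ι} (hs : ∀ i ∈ s, q i ≤ p i) :
    ∑' i : s, q i ≤ ∑' i, √(p i * q i) := by
  have hle : ∀ i : s, q i ≤ √(p i * q i) := fun i =>
    Real.le_sqrt_of_sq_le (by rw [sq]; exact mul_le_mul_of_nonneg_right (hs i i.2) (hq i))
  calc ∑' i : s, q i
      ≤ ∑' i : s, √(p i * q i) :=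
        Summable.tsum_le_tsum hle (.of_nonneg_of_le (fun i => hq i) hle (hpq.subtype s))
          (hpq.subtype s)
    _ ≤ ∑' i, √(p i * q i) := hpq.tsum_subtype_le _ s fun _ => Real.sqrt_nonneg _

theorem tendsto_tsum_setOf_le_of_tendsto_tsum_sqrt_mul {ι : ℕ → Type*} {p q : ∀ n, ι n → ℝ}
    (hp : ∀ n i, 0 ≤ p n i) (hq : ∀ n i, 0 ≤ q n i) (hp₁ : ∀ n, HasSum (p n) 1)
    (hq₁ : ∀ n, Summable (q n)) (hB : Tendsto (fun n => ∑' i, √(p n i * q n i)) atTop (𝓝 0)) :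
    Tendsto (fun n => ∑' i : {i | q n i ≤ p n i}, p n i) atTop (𝓝 1) ∧
      Tendsto (fun n => ∑' i : {i | q n i ≤ p n i}, q n i) atTop (𝓝 0) := by
  set A := fun n => {i | q n i ≤ p n i}
  have hpq : ∀ n, Summable fun i => √(p n i * q n i) := fun n =>
    summable_sqrt_mul (hp n) (hq n) (hp₁ n).summable (hq₁ n)
  refine ⟨?_, squeeze_zero (fun n => tsum_nonneg fun i => hq n i)
    (fun n => tsum_subtype_le_tsum_sqrt_mul (hq n) (hpq n) fun _ hi => hi) hB⟩
  have hsplit : ∀ n, ∑' i : A n, p n i = 1 - ∑' i : ↥(A n)ᶜ, p n i := fun n => by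
    rw [← (hp₁ n).tsum_eq, ← ((hp₁ n).summable.subtype _).tsum_add_tsum_compl
      ((hp₁ n).summable.subtype _), add_sub_cancel_right]
  have hcompl : ∀ n, ∑' i : ↥(A n)ᶜ, p n i ≤ ∑' i, √(p n i * q n i) := fun n => by
    simpa only [mul_comm] using tsum_subtype_le_tsum_sqrt_mul (hp n)
      (by simpa only [mul_comm] using hpq n) (s := (A n)ᶜ) fun _ hi => le_of_not_ge hi
  refine tendsto_of_tendsto_of_tendsto_of_le_of_le (by simpa using hB.const_sub 1)
    tendsto_const_nhds (fun n => ?_) (fun n => ?_) <;> rw [hsplit]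
  · linarith [hcompl n]
  · linarith [(tsum_nonneg fun i => hp n i : 0 ≤ ∑' i : ↥(A n)ᶜ, p n i)]

section GaltonWatson

variable {βA αA βH αH : ℝ}

theorem gwPath_eq_pathWeight (β α : ℝ) (ω₀ n : ℕ) (ω : Fin n → ℕ) :
    gwPath β α ω₀ n ω = pathWeight (gwStep β α) ω₀ ω := by
  refine Finset.prod_congr rfl fun ⟨k, hk⟩ _ => ?_
  rcases k with _ | k
  · rfl
  · simp only [Nat.add_one_ne_zero, if_false]
    exact congrArg₂ _ (Fin.cons_succ (α := fun _ => ℕ) ω₀ ω ⟨k, by omega⟩).symm rfl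

theorem gwStep_nonneg {β α : ℝ} (hβ : 0 ≤ β) (hα : 0 ≤ α) (x y : ℕ) : 0 ≤ gwStep β α x y :=
  poissonWeight_nonneg (by positivity) y

theorem gwPath_nonneg {β α : ℝ} (hβ : 0 ≤ β) (hα : 0 ≤ α) (ω₀ n : ℕ) (ω : Fin n → ℕ) :
    0 ≤ gwPath β α ω₀ n ω :=
  gwPath_eq_pathWeight β α ω₀ n ω ▸ pathWeight_nonneg (gwStep_nonneg hβ hα) ω₀ ω

theorem hasSum_gwPath {β α : ℝ} (hβ : 0 ≤ β) (hα : 0 ≤ α) (ω₀ n : ℕ) :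
    HasSum (gwPath β α ω₀ n) 1 := by
  simpa only [← gwPath_eq_pathWeight] using
    hasSum_pathWeight (gwStep_nonneg hβ hα) (fun x => hasSum_poissonWeight _) ω₀ n

noncomputable def gwAffinityKernel (βA αA βH αH : ℝ) (x y : ℕ) : ℝ :=
  √(gwStep βA αA x y * gwStep βH αH x y)

theorem hasSum_gwAffinityKernel (hβA : 0 ≤ βA) (hαA : 0 ≤ αA) (hβH : 0 ≤ βH) (hαH : 0 ≤ αH)
    (x : ℕ) :
    HasSum (gwAffinityKernel βA αA βH αH x)
      (exp (-(√(βA * x + αA) - √(βH * x + αH)) ^ 2 / 2)) :=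
  hasSum_sqrt_poissonWeight_mul (by positivity) (by positivity)

theorem exists_lt_one_tsum_gwAffinityKernel_mul_le (hβA : 0 ≤ βA) (hαA : 0 < αA)
    (hβH : 0 ≤ βH) (hαH : 0 < αH) (hβ : βA ≠ βH) :
    ∃ ρ < 1, ∀ x : ℕ, ∑' y, gwAffinityKernel βA αA βH αH x y
      * exp (-(√(βA * y + αA) - √(βH * y + αH)) ^ 2 / 2) ≤ ρ := by
  set g : ℕ → ℝ := fun x => exp (-(√(βA * x + αA) - √(βH * x + αH)) ^ 2 / 2)
  set m : ℕ → ℝ := fun x => √(βA * x + αA) * √(βH * x + αH)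
  have hg₀ : ∀ x, 0 ≤ g x := fun x => (exp_pos _).le
  have hg₁ : ∀ x, g x ≤ 1 := fun x => exp_le_one_iff.2 (by nlinarith)
  have hg : Tendsto g atTop (𝓝 0) :=
    tendsto_exp_atBot.comp <| (tendsto_neg_atTop_atBot.comp <|
      (tendsto_sq_sqrt_sub_sqrt_atTop αA αH hβA hβH hβ).comp
        tendsto_natCast_atTop_atTop).atBot_div_const two_pos
  obtain ⟨j, hj⟩ := (hg.eventually (gt_mem_nhds one_pos)).exists
  have hm : ∀ x, 0 < m x := fun x => by positivity
  have hK : ∀ x y, gwAffinityKernel βA αA βH αH x y = g x * poissonWeight (m x) y := fun x y =>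
    sqrt_poissonWeight_mul (by positivity) (by positivity) y
  have hT : ∀ x, ∑' y, poissonWeight (m x) y * g y < 1 := fun x =>
    tsum_poissonWeight_mul_lt_one (hm x) hg₀ hg₁ hj
  have hs : ∀ x, ∑' y, gwAffinityKernel βA αA βH αH x y * g y
      = g x * ∑' y, poissonWeight (m x) y * g y := fun x => by
    simp_rw [hK, mul_assoc, tsum_mul_left]
  have hT₀ : ∀ x, 0 ≤ ∑' y, poissonWeight (m x) y * g y := fun x =>
    tsum_nonneg fun y => mul_nonneg (poissonWeight_nonneg (hm x).le y) (hg₀ y)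
  refine exists_lt_forall_le_of_tendsto (fun x => ?_) (squeeze_zero (fun x => ?_) (fun x => ?_) hg)
    one_pos <;> rw [hs]
  · exact mul_lt_one_of_nonneg_of_lt_one_right (hg₁ x) (hT₀ x) (hT x)
  · exact mul_nonneg (hg₀ x) (hT₀ x)
  · exact mul_le_of_le_one_right (hg₀ x) (hT x).le

theorem tendsto_tsum_sqrt_gwPath_mul (hβA : 0 ≤ βA) (hαA : 0 < αA) (hβH : 0 ≤ βH) (hαH : 0 < αH)
    (hβ : βA ≠ βH) (ω₀ : ℕ) :
    Tendsto (fun n => ∑' ω : Fin n → ℕ, √(gwPath βA αA ω₀ n ω * gwPath βH αH ω₀ n ω))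
      atTop (𝓝 0) := by
  obtain ⟨ρ, hρ, hK⟩ := exists_lt_one_tsum_gwAffinityKernel_mul_le hβA hαA hβH hαH hβ
  have hbound : ∀ n, ∑' ω : Fin n → ℕ,
      ENNReal.ofReal √(gwPath βA αA ω₀ n ω * gwPath βH αH ω₀ n ω) ≤ ENNReal.ofReal ρ ^ (n / 2) := by
    intro n
    simp_rw [gwPath_eq_pathWeight, sqrt_pathWeight_mul (gwStep_nonneg hβA hαA.le)
      (gwStep_nonneg hβH hαH.le)]
    exact tsum_ofReal_pathWeight_le_pow_half (fun _ _ => Real.sqrt_nonneg _)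
      (hasSum_gwAffinityKernel hβA hαA.le hβH hαH.le) (fun x => exp_le_one_iff.2 (by nlinarith))
      hK ω₀ n
  have hdecay : Tendsto (fun n : ℕ => ENNReal.ofReal ρ ^ (n / 2)) atTop (𝓝 0) :=
    (ENNReal.tendsto_pow_atTop_nhds_zero_of_lt_one (ENNReal.ofReal_lt_one.2 hρ)).comp
      (Nat.tendsto_div_const_atTop two_ne_zero)
  have h := (ENNReal.tendsto_toReal ENNReal.zero_ne_top).comp <|
    tendsto_of_tendsto_of_tendsto_of_le_of_le tendsto_const_nhds hdecay (fun _ => zero_le) hbound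
  refine h.congr fun n => ?_
  simp only [Function.comp_apply, ENNReal.tsum_toReal_eq fun _ => ENNReal.ofReal_ne_top,
    ENNReal.toReal_ofReal (Real.sqrt_nonneg _)]

end GaltonWatson

theorem entirely_separated_general (βA βH αA αH : ℝ)
    (hβA : 0 < βA) (hβH : 0 < βH) (hαA : 0 < αA) (hαH : 0 < αH)
    (hβne : βA ≠ βH)
    (ω₀ : ℕ) :
    ∃ nm : ℕ → ℕ, StrictMono nm ∧
      ∃ A : (m : ℕ) → Set (Fin (nm m) → ℕ),
        Tendsto (fun m : ℕ => ∑' ω : ↥(A m), gwPath βA αA ω₀ (nm m) ω.1) atTop (nhds 1) ∧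
        Tendsto (fun m : ℕ => ∑' ω : ↥(A m), gwPath βH αH ω₀ (nm m) ω.1) atTop (nhds 0) :=
  ⟨id, strictMono_id, fun n => {ω | gwPath βH αH ω₀ n ω ≤ gwPath βA αA ω₀ n ω},
    tendsto_tsum_setOf_le_of_tendsto_tsum_sqrt_mul
      (fun n => gwPath_nonneg hβA.le hαA.le ω₀ n) (fun n => gwPath_nonneg hβH.le hαH.le ω₀ n)
      (fun n => hasSum_gwPath hβA.le hαA.le ω₀ n)
      (fun n => (hasSum_gwPath hβH.le hαH.le ω₀ n).summable)
      (tendsto_tsum_sqrt_gwPath_mul hβA.le hαA hβH.le hαH hβne ω₀)⟩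

/-- For strictly positive parameters with `β_A ≠ β_H`
(the union `P_SP,1 ∪ P_SP,2 ∪ P_SP,3ab ∪ P_SP,3c ∪ P_SP,3d`), the sequences of path laws
`(P_{A,n})` and `(P_{H,n})` are entirely separated. -/
theorem entirely_separated (βA βH αA αH : ℝ)
    (hβA : 0 < βA) (hβH : 0 < βH) (hαA : 0 < αA) (hαH : 0 < αH)
    (hne : (βA, αA) ≠ (βH, αH)) (hβne : βA ≠ βH)
    (ω₀ : ℕ) (hω₀ : 1 ≤ ω₀) :
    ∃ nm : ℕ → ℕ, StrictMono nm ∧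
      ∃ A : (m : ℕ) → Set (Fin (nm m) → ℕ),
        Tendsto (fun m : ℕ => ∑' ω : ↥(A m), gwPath βA αA ω₀ (nm m) ω.1) atTop (nhds 1) ∧
        Tendsto (fun m : ℕ => ∑' ω : ↥(A m), gwPath βH αH ω₀ (nm m) ω.1) atTop (nhds 0) :=
  entirely_separated_general βA βH αA αH hβA hβH hαA hαH hβne ω₀
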